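/- arXiv:2512.06576 — 3 statements merged into one kernel-verified Lean document; each statement's English description precedes it below -/
import Mathlib

section
/- For every x, y in R and every natural number N ≥ 1, one has [x^N, y] = N · x^{N-1} · [x,y] − Σ_{i=0}^{N-2} (N−1−i) · C(N,i) · ad_x^{N-i}(y) · x^i (the sum being empty when N = 1). -/
private lemma iter_step {R : Type*} [Ring R] (x z : R) (k : ℕ) :
    x * ((fun w => x * w - w * x)^[k] z) =
      (fun w => x * w - w * x)^[k + 1] z + (fun w => x * w - w * x)^[k] z * x := by
  rw [Function.iterate_succ_apply']
  simp

private lemma pow_mul_expand {R : Type*} [Ring R] (x z : R) (n : ℕ) :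
    x ^ n * z = ∑ k ∈ Finset.range (n + 1),
      n.choose k • ((fun w => x * w - w * x)^[k] z * x ^ (n - k)) := by
  induction n with
  | zero => simp
  | succ n ih =>
    rw [pow_succ', mul_assoc, ih, Finset.mul_sum]
    have hterm : ∀ k ∈ Finset.range (n + 1),
        x * (n.choose k • ((fun w => x * w - w * x)^[k] z * x ^ (n - k))) =
        n.choose k • ((fun w => x * w - w * x)^[k + 1] z * x ^ (n - k)) +
        n.choose k • ((fun w => x * w - w * x)^[k] z * x ^ (n + 1 - k)) := by
      intro k hk
      rw [Finset.mem_range] at hk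
      have h1 : n + 1 - k = (n - k) + 1 := by omega
      rw [mul_smul_comm, ← mul_assoc, iter_step, add_mul, smul_add, h1,
        mul_assoc, ← pow_succ']
    rw [Finset.sum_congr rfl hterm, Finset.sum_add_distrib,
      Finset.sum_range_succ' (fun k => (n + 1).choose k •
        ((fun w => x * w - w * x)^[k] z * x ^ (n + 1 - k))) (n + 1)]
    simp only [Nat.succ_sub_succ, Nat.choose_succ_succ, add_smul, Nat.choose_zero_right,
      one_smul, Function.iterate_zero_apply, Nat.sub_zero, Finset.sum_add_distrib]
    rw [Finset.sum_range_succ' (fun k => n.choose k •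
        ((fun w => x * w - w * x)^[k] z * x ^ (n + 1 - k))) n,
      Finset.sum_range_succ (fun k => n.choose (k + 1) •
        ((fun w => x * w - w * x)^[k + 1] z * x ^ (n - k))) n]
    simp only [Nat.succ_sub_succ, Nat.choose_succ_self, zero_smul, add_zero,
      Nat.choose_zero_right, one_smul, Function.iterate_zero_apply, Nat.sub_zero]
    abel

/-- For every `x, y` in an associative unital ring `R` and every `N ≥ 1`,
`[x^N, y] = N • x^{N-1} * [x,y] − Σ_{i=0}^{N-2} (N−1−i)·C(N,i) • ad_x^{N-i}(y) * x^i`,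
the sum being empty when `N = 1`; here `ad_x(z) = x*z - z*x`. -/
theorem commutator_pow_expansion_leading {R : Type*} [Ring R] (x y : R) (N : ℕ)
    (hN : 1 ≤ N) :
    x ^ N * y - y * x ^ N =
      N • (x ^ (N - 1) * (x * y - y * x)) -
        ∑ i ∈ Finset.range (N - 1),
          ((N - 1 - i) * N.choose i) • ((fun z => x * z - z * x)^[N - i] y * x ^ i) := by
  obtain ⟨m, rfl⟩ : ∃ m, N = m + 1 := ⟨N - 1, (Nat.succ_pred_eq_of_pos hN).symm⟩
  simp only [Nat.add_sub_cancel]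
  -- h1 : LHS as a sum
  have h1 : x ^ (m + 1) * y - y * x ^ (m + 1) =
      ∑ k ∈ Finset.range (m + 1),
        (m + 1).choose (k + 1) • ((fun z => x * z - z * x)^[k + 1] y * x ^ (m - k)) := by
    rw [pow_mul_expand x y (m + 1),
      Finset.sum_range_succ' (fun k => (m + 1).choose k •
        ((fun w => x * w - w * x)^[k] y * x ^ (m + 1 - k))) (m + 1)]
    simp [Nat.succ_sub_succ]
  -- h2 : first RHS term as a sum
  have h2 : (m + 1) • (x ^ m * (x * y - y * x)) =
      ∑ k ∈ Finset.range (m + 1),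
        ((m + 1) * m.choose k) • ((fun z => x * z - z * x)^[k + 1] y * x ^ (m - k)) := by
    rw [pow_mul_expand x (x * y - y * x) m, Finset.smul_sum]
    refine Finset.sum_congr rfl fun k hk => ?_
    rw [smul_smul, Function.iterate_succ_apply]
  -- h3 : second RHS sum reindexed
  have h3 : ∑ i ∈ Finset.range m,
        ((m - i) * (m + 1).choose i) • ((fun z => x * z - z * x)^[m + 1 - i] y * x ^ i) =
      ∑ k ∈ Finset.range (m + 1),
        (k * (m + 1).choose (k + 1)) • ((fun z => x * z - z * x)^[k + 1] y * x ^ (m - k)) := by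
    rw [Finset.sum_range_succ' (fun k => (k * (m + 1).choose (k + 1)) •
        ((fun z => x * z - z * x)^[k + 1] y * x ^ (m - k))) m]
    simp only [zero_mul, zero_smul, add_zero]
    rw [← Finset.sum_range_reflect]
    refine Finset.sum_congr rfl fun j hj => ?_
    rw [Finset.mem_range] at hj
    have e1 : m - (m - 1 - j) = j + 1 := by omega
    have e2 : m + 1 - (m - 1 - j) = j + 2 := by omega
    have e3 : (m + 1).choose (m - 1 - j) = (m + 1).choose (j + 2) := by
      rw [← Nat.choose_symm (by omega : j + 2 ≤ m + 1)]
      congr 1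
      omega
    have e4 : m - (j + 1) = m - 1 - j := by omega
    rw [e1, e2, e3, e4]
  rw [h1, h2, h3, eq_sub_iff_add_eq, ← Finset.sum_add_distrib]
  refine Finset.sum_congr rfl fun k hk => ?_
  rw [← add_smul]
  congr 1
  rw [Nat.add_one_mul_choose_eq]
  ring
end

section
/- Assume that for all i, j ∈ ι and all natural numbers m ≥ 0 the commutator [V_i, V_j] = V_i∘V_j − V_j∘V_i maps I^m(f,V) into I^m(f,V). Then for every k ≥ 1, every list of indices i_1,…,i_k ∈ ι, every permutation σ of {1,…,k}, and every α ∈ 𝒜, the difference V_{i_1}(⋯ V_{i_k}(f_α)⋯) − V_{i_{σ(1)}}(⋯ V_{i_{σ(k)}}(f_α)⋯) lies in I^{k−1}(f,V). -/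
/-- The ideal `I^n(f,V)` of the commutative ring `A` generated by all elements
`V_{i_1}(V_{i_2}(⋯ V_{i_k}(f_α)⋯))` with `0 ≤ k ≤ n`. -/
def iterIdeal {A : Type*} [CommRing A] {𝒜 ι : Type*} (f : 𝒜 → A) (V : ι → A → A)
    (n : ℕ) : Ideal A :=
  Ideal.span {x | ∃ l : List ι, l.length ≤ n ∧ ∃ α : 𝒜, x = l.foldr V (f α)}

section aux
variable {A : Type*} [CommRing A] {𝒜 ι : Type*} (f : 𝒜 → A) (V : ι → A → A)

theorem iterIdeal_mono {m n : ℕ} (h : m ≤ n) : iterIdeal f V m ≤ iterIdeal f V n :=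
  Ideal.span_mono (fun x ⟨l, hl, α, hx⟩ => ⟨l, hl.trans h, α, hx⟩)

theorem foldr_mem (l : List ι) (α : 𝒜) : l.foldr V (f α) ∈ iterIdeal f V l.length :=
  Ideal.subset_span ⟨l, le_rfl, α, rfl⟩

theorem V_map_mem (hadd : ∀ i : ι, ∀ x y : A, V i (x + y) = V i x + V i y)
    (hmul : ∀ i : ι, ∀ x y : A, V i (x * y) = V i x * y + x * V i y)
    (i : ι) {m : ℕ} {x : A} (hx : x ∈ iterIdeal f V m) :
    V i x ∈ iterIdeal f V (m + 1) := by
  have h0 : V i 0 = 0 := by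
    have := hadd i 0 0
    simpa using this.symm
  refine Submodule.span_induction ?_ ?_ ?_ ?_ hx
  · rintro x ⟨l, hl, α, rfl⟩
    exact Ideal.subset_span ⟨i :: l, by simpa using Nat.succ_le_succ hl, α, rfl⟩
  · rw [h0]; exact Ideal.zero_mem _
  · intro x y _ _ hVx hVy
    rw [hadd]
    exact Ideal.add_mem _ hVx hVy
  · intro a x hxm hVx
    have hx' : x ∈ iterIdeal f V (m + 1) :=
      iterIdeal_mono f V (Nat.le_succ m) hxm
    rw [smul_eq_mul, hmul]
    exact Ideal.add_mem _ (Ideal.mul_mem_left _ _ hx') (Ideal.mul_mem_left _ _ hVx)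

theorem V_sub (hadd : ∀ i : ι, ∀ x y : A, V i (x + y) = V i x + V i y)
    (i : ι) (x y : A) : V i (x - y) = V i x - V i y := by
  have h0 : V i 0 = 0 := by have := hadd i 0 0; simpa using this.symm
  have h := hadd i (x - y) y
  rw [sub_add_cancel] at h
  rw [eq_sub_iff_add_eq]
  exact h.symm

theorem perm_foldr_sub (hadd : ∀ i : ι, ∀ x y : A, V i (x + y) = V i x + V i y)
    (hmul : ∀ i : ι, ∀ x y : A, V i (x * y) = V i x * y + x * V i y)
    (hcomm : ∀ i j : ι, ∀ m : ℕ, ∀ x ∈ iterIdeal f V m,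
      V i (V j x) - V j (V i x) ∈ iterIdeal f V m)
    (α : 𝒜) :
    ∀ {l1 l2 : List ι}, l1.Perm l2 →
      l1.foldr V (f α) - l2.foldr V (f α) ∈ iterIdeal f V (l1.length - 1) := by
  intro l1 l2 h
  induction h with
  | nil => simpa using Ideal.zero_mem _
  | cons a h ih =>
    rename_i t1 t2
    rcases t1 with _ | ⟨b, t⟩
    · have : t2 = [] := List.Perm.eq_nil h.symm
      subst this
      simpa using Ideal.zero_mem _
    · have hd : List.foldr V (f α) (a :: (b :: t)) - List.foldr V (f α) (a :: t2) =
          V a (List.foldr V (f α) (b :: t) - List.foldr V (f α) t2) := by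
        rw [V_sub V hadd]
        simp
      rw [hd]
      have h2 : V a (List.foldr V (f α) (b :: t) - List.foldr V (f α) t2) ∈
          iterIdeal f V (t.length + 1) := by
        simpa using V_map_mem f V hadd hmul a ih
      simpa using h2
  | swap a b t =>
    simp only [List.foldr_cons, List.length_cons]
    have hw := foldr_mem f V t α
    have := hcomm b a t.length _ hw
    exact iterIdeal_mono f V (by omega) this
  | trans h1 h2 ih1 ih2 =>
    rename_i l1 l2 l3
    have hl : l1.length = l2.length := h1.length_eq
    have : l1.foldr V (f α) - l3.foldr V (f α) =
        (l1.foldr V (f α) - l2.foldr V (f α)) + (l2.foldr V (f α) - l3.foldr V (f α)) := by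
      ring
    rw [this]
    exact Ideal.add_mem _ ih1 (hl ▸ ih2)

end aux

/-- If the commutators `[V_i, V_j]` of the derivations `V` map each `I^m(f,V)` into
itself, then for every `k ≥ 1`, every string of indices `i_1,…,i_k`, every
permutation `σ` of `{1,…,k}` and every `α`, the difference
`V_{i_1}(⋯ V_{i_k}(f_α)⋯) − V_{i_{σ(1)}}(⋯ V_{i_{σ(k)}}(f_α)⋯)` lies in
`I^{k−1}(f,V)`. -/
theorem iterIdeal_symmetrization {A : Type*} [CommRing A] {𝒜 ι : Type*}
    (f : 𝒜 → A) (V : ι → A → A)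
    (hadd : ∀ i : ι, ∀ x y : A, V i (x + y) = V i x + V i y)
    (hmul : ∀ i : ι, ∀ x y : A, V i (x * y) = V i x * y + x * V i y)
    (hcomm : ∀ i j : ι, ∀ m : ℕ, ∀ x ∈ iterIdeal f V m,
      V i (V j x) - V j (V i x) ∈ iterIdeal f V m)
    (k : ℕ) (hk : 1 ≤ k) (idx : Fin k → ι) (σ : Equiv.Perm (Fin k)) (α : 𝒜) :
    (List.ofFn idx).foldr V (f α) - (List.ofFn (idx ∘ σ)).foldr V (f α) ∈
      iterIdeal f V (k - 1) := by
  have hp : (List.ofFn idx).Perm (List.ofFn (idx ∘ σ)) := (σ.ofFn_comp_perm idx).symm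
  have := perm_foldr_sub f V hadd hmul hcomm α hp
  simpa using this
end

section
/- Assume ι carries a linear order and that for all i, j ∈ ι and all natural numbers m ≥ 0 the commutator [V_i, V_j] = V_i∘V_j − V_j∘V_i maps I^m(f,V) into I^m(f,V). Then for every n ≥ 0 the ideal I^n(f,V) equals the ideal of A generated by the elements V_{i_1}(⋯ V_{i_k}(f_α)⋯) with 0 ≤ k ≤ n, α ∈ 𝒜, and nondecreasing index strings i_1 ≤ i_2 ≤ ⋯ ≤ i_k. -/
section Aux

variable {A : Type*} [CommRing A] {𝒜 ι : Type*} (f : 𝒜 → A) (V : ι → A → A)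

/-- span of generators of length strictly less than `m`. -/
def iterIdealLt (m : ℕ) : Ideal A :=
  Ideal.span {x | ∃ l : List ι, l.length < m ∧ ∃ α : 𝒜, x = l.foldr V (f α)}

def sortSpan [LinearOrder ι] (m : ℕ) : Ideal A :=
  Ideal.span {x | ∃ s : List ι, s.length ≤ m ∧ s.Pairwise (· ≤ ·) ∧
    ∃ β : 𝒜, x = s.foldr V (f β)}

def sortSpanB [LinearOrder ι] (c : ι) (m : ℕ) : Ideal A :=
  Ideal.span {x | ∃ s : List ι, s.length ≤ m ∧ s.Pairwise (· ≤ ·) ∧ (∀ y ∈ s, c ≤ y) ∧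
    ∃ β : 𝒜, x = s.foldr V (f β)}

lemma iterIdealLt_mono {m m' : ℕ} (h : m ≤ m') : iterIdealLt f V m ≤ iterIdealLt f V m' :=
  Ideal.span_mono fun _ ⟨l, hl, α, hx⟩ => ⟨l, lt_of_lt_of_le hl h, α, hx⟩

lemma iterIdeal_le_lt (m : ℕ) : iterIdeal f V m ≤ iterIdealLt f V (m + 1) :=
  Ideal.span_mono fun _ ⟨l, hl, α, hx⟩ => ⟨l, Nat.lt_succ_of_le hl, α, hx⟩

lemma sortSpan_mono [LinearOrder ι] {m m' : ℕ} (h : m ≤ m') :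
    sortSpan f V m ≤ sortSpan f V m' :=
  Ideal.span_mono fun _ ⟨s, hl, hs, β, hx⟩ => ⟨s, le_trans hl h, hs, β, hx⟩

lemma sortSpanB_le [LinearOrder ι] (c : ι) {m m' : ℕ} (h : m ≤ m') :
    sortSpanB f V c m ≤ sortSpan f V m' :=
  Ideal.span_mono fun _ ⟨s, hl, hs, _, β, hx⟩ => ⟨s, le_trans hl h, hs, β, hx⟩

lemma der_span (hadd : ∀ i : ι, ∀ x y : A, V i (x + y) = V i x + V i y)
    (hmul : ∀ i : ι, ∀ x y : A, V i (x * y) = V i x * y + x * V i y)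
    (i : ι) (S : Set A) {x : A} (hx : x ∈ Ideal.span S) :
    V i x ∈ Ideal.span (S ∪ V i '' S) := by
  have h0 : V i 0 = 0 := by
    have h := hadd i 0 0
    simp only [add_zero] at h
    exact (left_eq_add.mp h)
  induction hx using Submodule.span_induction with
  | mem x hxS => exact Ideal.subset_span (Or.inr ⟨x, hxS, rfl⟩)
  | zero => rw [h0]; exact zero_mem _
  | add x y hx hy ihx ihy => rw [hadd]; exact add_mem ihx ihy
  | smul a x hx ihx =>
      rw [smul_eq_mul, hmul]
      exact add_mem (Ideal.mul_mem_left _ _ (Ideal.span_mono Set.subset_union_left hx))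
        (Ideal.mul_mem_left _ _ ihx)

/-- A derivation maps the span-of-short-strings into the next one. -/
lemma der_iterIdealLt (hadd : ∀ i : ι, ∀ x y : A, V i (x + y) = V i x + V i y)
    (hmul : ∀ i : ι, ∀ x y : A, V i (x * y) = V i x * y + x * V i y)
    (i : ι) (m : ℕ) {x : A} (hx : x ∈ iterIdealLt f V m) :
    V i x ∈ iterIdealLt f V (m + 1) := by
  refine Ideal.span_le.mpr ?_
    (der_span V hadd hmul i {x | ∃ l : List ι, l.length < m ∧ ∃ α : 𝒜, x = l.foldr V (f α)} hx)
  rintro y (⟨l, hl, α, rfl⟩ | ⟨z, ⟨l, hl, α, rfl⟩, rfl⟩)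
  · exact Ideal.subset_span ⟨l, Nat.lt_succ_of_lt hl, α, rfl⟩
  · exact Ideal.subset_span ⟨i :: l, Nat.succ_lt_succ hl, α, rfl⟩

lemma foldr_min_le [LinearOrder ι] (s : List ι) (i : ι) :
    s.foldr min i ≤ i ∧ ∀ y ∈ s, s.foldr min i ≤ y := by
  induction s with
  | nil => simp
  | cons a t ih =>
      refine ⟨le_trans (min_le_right _ _) ih.1, ?_⟩
      intro y hy
      rcases List.mem_cons.mp hy with h | h
      · subst h; exact min_le_left _ _
      · exact le_trans (min_le_right _ _) (ih.2 y h)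

/-- Insertion lemma: prepending `i` onto a sorted string lands in the span of sorted
strings (with all entries above any common lower bound), modulo shorter strings. -/
lemma ins [LinearOrder ι]
    (hadd : ∀ i : ι, ∀ x y : A, V i (x + y) = V i x + V i y)
    (hmul : ∀ i : ι, ∀ x y : A, V i (x * y) = V i x * y + x * V i y)
    (hcomm : ∀ i j : ι, ∀ m : ℕ, ∀ x ∈ iterIdeal f V m,
      V i (V j x) - V j (V i x) ∈ iterIdeal f V m) :
    ∀ (t : List ι), t.Pairwise (· ≤ ·) → ∀ (i c : ι) (α : 𝒜), c ≤ i → (∀ y ∈ t, c ≤ y) →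
      (i :: t).foldr V (f α) ∈ sortSpanB f V c (t.length + 1) ⊔ iterIdealLt f V t.length := by
  intro t
  induction t with
  | nil =>
      intro _ i c α hci _
      exact Submodule.mem_sup_left (Ideal.subset_span
        ⟨[i], by simp, List.pairwise_singleton _ i, by simpa using hci, α, rfl⟩)
  | cons j t' ih =>
      intro ht i c α hci hct
      have hjt' : ∀ y ∈ t', j ≤ y := (List.pairwise_cons.mp ht).1
      have ht' : t'.Pairwise (· ≤ ·) := (List.pairwise_cons.mp ht).2
      have hcj : c ≤ j := hct j (List.mem_cons_self)
      rcases le_or_gt i j with hij | hji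
      · refine Submodule.mem_sup_left (Ideal.subset_span
          ⟨i :: j :: t', le_refl _, ?_, ?_, α, rfl⟩)
        · refine List.pairwise_cons.mpr ⟨?_, ht⟩
          intro y hy
          rcases List.mem_cons.mp hy with h | h
          · subst h; exact hij
          · exact le_trans hij (hjt' y h)
        · intro y hy
          rcases List.mem_cons.mp hy with h | h
          · subst h; exact hci
          · exact hct y h
      · set y := t'.foldr V (f α) with hy
        have hgen : y ∈ iterIdeal f V t'.length := Ideal.subset_span ⟨t', le_refl _, α, rfl⟩
        have hcm : V i (V j y) - V j (V i y) ∈ iterIdeal f V t'.length := hcomm i j _ y hgen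
        have hswap : (i :: j :: t').foldr V (f α)
            = V j (V i y) + (V i (V j y) - V j (V i y)) := by
          simp only [List.foldr, hy]; ring
        rw [hswap]
        refine add_mem ?_ (Submodule.mem_sup_right
          (iterIdealLt_mono f V (le_refl _) (iterIdeal_le_lt f V t'.length hcm)))
        have h1 := ih ht' i j α hji.le hjt'
        rcases Submodule.mem_sup.mp h1 with ⟨p, hp, q, hq, hpq⟩
        have hViy : V i y = (i :: t').foldr V (f α) := rfl
        have hsplit : V j (V i y) = V j p + V j q := by
          rw [hViy, ← hpq, hadd]
        rw [hsplit]
        refine add_mem ?_ (Submodule.mem_sup_right (der_iterIdealLt f V hadd hmul j _ hq))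
        -- V j p ∈ sortSpanB f V c (t'.length + 2)
        refine Submodule.mem_sup_left ?_
        have h2 := der_span V hadd hmul j
          {x | ∃ s : List ι, s.length ≤ t'.length + 1 ∧ s.Pairwise (· ≤ ·) ∧ (∀ y ∈ s, j ≤ y) ∧
            ∃ β : 𝒜, x = s.foldr V (f β)} hp
        refine Ideal.span_le.mpr ?_ h2
        rintro z (⟨s, hl, hs, hb, β, rfl⟩ | ⟨w, ⟨s, hl, hs, hb, β, rfl⟩, rfl⟩)
        · exact Ideal.subset_span
            ⟨s, Nat.le_succ_of_le hl, hs, fun y hy => le_trans hcj (hb y hy), β, rfl⟩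
        · refine Ideal.subset_span ⟨j :: s, Nat.succ_le_succ hl, ?_, ?_, β, rfl⟩
          · exact List.pairwise_cons.mpr ⟨hb, hs⟩
          · intro y hy
            rcases List.mem_cons.mp hy with h | h
            · subst h; exact hcj
            · exact le_trans hcj (hb y h)

lemma all' [LinearOrder ι]
    (hadd : ∀ i : ι, ∀ x y : A, V i (x + y) = V i x + V i y)
    (hmul : ∀ i : ι, ∀ x y : A, V i (x * y) = V i x * y + x * V i y)
    (hcomm : ∀ i j : ι, ∀ m : ℕ, ∀ x ∈ iterIdeal f V m,
      V i (V j x) - V j (V i x) ∈ iterIdeal f V m) :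
    ∀ (l : List ι) (α : 𝒜),
      l.foldr V (f α) ∈ sortSpan f V l.length ⊔ iterIdealLt f V l.length := by
  intro l
  induction l with
  | nil =>
      intro α
      exact Submodule.mem_sup_left (Ideal.subset_span ⟨[], by simp, List.Pairwise.nil, α, rfl⟩)
  | cons i t ih =>
      intro α
      rcases Submodule.mem_sup.mp (ih α) with ⟨p, hp, q, hq, hpq⟩
      have hstep : (i :: t).foldr V (f α) = V i p + V i q := by
        simp only [List.foldr]; rw [← hpq, hadd]
      rw [hstep]
      simp only [List.length_cons]
      refine add_mem ?_ (Submodule.mem_sup_right (der_iterIdealLt f V hadd hmul i t.length hq))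
      have h2 := der_span V hadd hmul i
        {x | ∃ s : List ι, s.length ≤ t.length ∧ s.Pairwise (· ≤ ·) ∧
          ∃ β : 𝒜, x = s.foldr V (f β)} hp
      refine Ideal.span_le.mpr ?_ h2
      rintro z (⟨s, hl, hs, β, rfl⟩ | ⟨w, ⟨s, hl, hs, β, rfl⟩, rfl⟩)
      · exact Submodule.mem_sup_left
          (Ideal.subset_span ⟨s, Nat.le_succ_of_le hl, hs, β, rfl⟩)
      · have hmin := foldr_min_le s i
        have h3 := ins f V hadd hmul hcomm s hs i (s.foldr min i) β hmin.1 hmin.2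
        have hle : sortSpanB f V (s.foldr min i) (s.length + 1) ⊔ iterIdealLt f V s.length
            ≤ sortSpan f V (t.length + 1) ⊔ iterIdealLt f V (t.length + 1) :=
          sup_le_sup (sortSpanB_le f V _ (Nat.succ_le_succ hl))
            (iterIdealLt_mono f V (le_trans hl (Nat.le_succ _)))
        exact hle h3

end Aux

/-- If `ι` is linearly ordered and the commutators `[V_i, V_j]` of the derivations
`V` map each `I^m(f,V)` into itself, then `I^n(f,V)` is generated by the
symmetrized derivatives, i.e. those `V_{i_1}(⋯ V_{i_k}(f_α)⋯)` with `0 ≤ k ≤ n`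
and nondecreasing index strings `i_1 ≤ i_2 ≤ ⋯ ≤ i_k`. -/
theorem iterIdeal_sorted_generators {A : Type*} [CommRing A] {𝒜 ι : Type*}
    [LinearOrder ι] (f : 𝒜 → A) (V : ι → A → A)
    (hadd : ∀ i : ι, ∀ x y : A, V i (x + y) = V i x + V i y)
    (hmul : ∀ i : ι, ∀ x y : A, V i (x * y) = V i x * y + x * V i y)
    (hcomm : ∀ i j : ι, ∀ m : ℕ, ∀ x ∈ iterIdeal f V m,
      V i (V j x) - V j (V i x) ∈ iterIdeal f V m)
    (n : ℕ) :
    iterIdeal f V n =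
      Ideal.span {x | ∃ l : List ι, l.length ≤ n ∧ l.Pairwise (· ≤ ·) ∧
        ∃ α : 𝒜, x = l.foldr V (f α)} := by
  induction n using Nat.strong_induction_on with
  | _ n ihn =>
  refine le_antisymm ?_ (Ideal.span_mono fun x ⟨l, hl, _, α, hx⟩ => ⟨l, hl, α, hx⟩)
  refine Ideal.span_le.mpr ?_
  rintro x ⟨l, hl, α, rfl⟩
  rcases Submodule.mem_sup.mp (all' f V hadd hmul hcomm l α) with ⟨p, hp, q, hq, hpq⟩
  rw [← hpq]
  refine add_mem ?_ ?_
  · exact sortSpan_mono f V hl hp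
  · refine Ideal.span_le.mpr ?_ hq
    rintro z ⟨l', hl', β, rfl⟩
    have hlt : l'.length < n := lt_of_lt_of_le hl' hl
    have hz : l'.foldr V (f β) ∈ iterIdeal f V l'.length :=
      Ideal.subset_span ⟨l', le_refl _, β, rfl⟩
    rw [ihn l'.length hlt] at hz
    refine Ideal.span_le.mpr ?_ hz
    rintro w ⟨l2, h2, hs2, γ, rfl⟩
    exact Ideal.subset_span ⟨l2, le_trans h2 hlt.le, hs2, γ, rfl⟩
end
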